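/- arXiv:1307.0079 — 2 statements merged into one kernel-verified Lean document; each statement's English description precedes it below -/
import Mathlib

section
/- Let G be a connected graph of order n. Then rx_3(G) = 2 if and only if G = K_5, or G is a 2-connected graph of order 4, or G has order 3. -/
/-!
With only two colours a rainbow tree has at most two edges, so a 2-colouring is a 3-rainbow
colouring exactly when every three vertices contain a *center*: one of them adjacent to the other
two through edges of different colours. In particular, if `c(up) = c(uq)` then the center of
`u, p, q` is `p` or `q`, whence `c(pq) ≠ c(up)`.

With four vertices, the three left after deleting any vertex span a star, so `G` is 2-connected.
With at least five vertices `G` is complete: if `u, v` were non-adjacent, every other vertex would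
be a center of `u, v`, and two of them, `p` and `q`, with `c(up) = c(uq)` would also have
`c(vp) = c(vq)`, leaving no colour for `pq`. With six vertices, some `u` has three other vertices
`x, y, z` with equal colours towards `u`, so the triangle `xyz` is monochromatic and has no center.

Conversely, a connected graph on three vertices contains a path, to be coloured with two colours,
a 2-connected graph on four vertices contains a 4-cycle, coloured by a perfect matching versus the
rest, and `K₅` is coloured by a pentagon versus the complementary pentagram.
-/

open SimpleGraph

universe u

/-- `T` is a rainbow `S`-tree: a tree (as a subgraph of `G`) containing all vertices of `S`
whose edges receive pairwise distinct colors under `c`. -/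
def SimpleGraph.IsRainbowSTree {V : Type u} {α : Type*} (G : SimpleGraph V)
    (c : Sym2 V → α) (S : Set V) (T : G.Subgraph) : Prop :=
  T.coe.IsTree ∧ S ⊆ T.verts ∧ Set.InjOn c T.edgeSet

/-- `c` is a `k`-rainbow coloring of `G`: every `k`-subset of vertices has a rainbow tree. -/
def SimpleGraph.IsRainbowColoring {V : Type u} {α : Type*} [DecidableEq V]
    (G : SimpleGraph V) (k : ℕ) (c : Sym2 V → α) : Prop :=
  ∀ S : Finset V, S.card = k → ∃ T : G.Subgraph, G.IsRainbowSTree c ↑S T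

/-- The `k`-rainbow index: minimum number of colors in a `k`-rainbow coloring. -/
noncomputable def SimpleGraph.rxk {V : Type u} [DecidableEq V]
    (G : SimpleGraph V) (k : ℕ) : ℕ :=
  sInf {q | ∃ c : Sym2 V → Fin q, G.IsRainbowColoring k c}

/-- Steiner distance of a vertex set `S` : minimum size of a tree of `G` connecting `S`. -/
noncomputable def SimpleGraph.steinerDist {V : Type u} (G : SimpleGraph V) (S : Set V) : ℕ :=
  sInf {m | ∃ T : G.Subgraph, T.coe.IsTree ∧ S ⊆ T.verts ∧ T.edgeSet.ncard = m}

/-- The `k`-Steiner diameter: maximum Steiner distance over all `k`-subsets. -/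
noncomputable def SimpleGraph.sdiam {V : Type u} [DecidableEq V]
    (G : SimpleGraph V) (k : ℕ) : ℕ :=
  sSup {d | ∃ S : Finset V, S.card = k ∧ G.steinerDist ↑S = d}

/-- A graph is 2-connected: at least 3 vertices and deleting any vertex leaves it connected. -/
def SimpleGraph.TwoConnected {V : Type u} [Fintype V] (G : SimpleGraph V) : Prop :=
  3 ≤ Fintype.card V ∧ ∀ v : V, (G.induce ({v}ᶜ : Set V)).Connected

namespace SimpleGraph

variable {V W α : Type*} {G : SimpleGraph V} {c : Sym2 V → α} {a b d x y z : V}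

def IsRainbowCenter (G : SimpleGraph V) (c : Sym2 V → α) (x y z : V) : Prop :=
  G.Adj x y ∧ G.Adj x z ∧ c s(x, y) ≠ c s(x, z)

def HasRainbowCenters (G : SimpleGraph V) (c : Sym2 V → α) : Prop :=
  ∀ ⦃a b d : V⦄, a ≠ b → a ≠ d → b ≠ d →
    G.IsRainbowCenter c a b d ∨ G.IsRainbowCenter c b a d ∨ G.IsRainbowCenter c d a b

namespace IsRainbowCenter

lemma symm (h : G.IsRainbowCenter c x y z) : G.IsRainbowCenter c x z y :=
  ⟨h.2.1, h.1, h.2.2.symm⟩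

lemma ne (h : G.IsRainbowCenter c x y z) : y ≠ z := by
  rintro rfl
  exact h.2.2 rfl

lemma or_or_of_mem (h : G.IsRainbowCenter c x y z) (hx : x ∈ ({a, b, d} : Set V))
    (hy : y ∈ ({a, b, d} : Set V)) (hz : z ∈ ({a, b, d} : Set V)) :
    G.IsRainbowCenter c a b d ∨ G.IsRainbowCenter c b a d ∨ G.IsRainbowCenter c d a b := by
  have hxy := h.1.ne
  have hxz := h.2.1.ne
  have hyz := h.ne
  have h' := h.symm
  rcases hx with rfl | rfl | rfl <;> rcases hy with rfl | rfl | rfl <;>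
    rcases hz with rfl | rfl | rfl <;> tauto

lemma map {H : SimpleGraph W} {c' : Sym2 W → α} {i j k : W} (h : H.IsRainbowCenter c' i j k)
    (f : H →g G) (hc : ∀ p q, c s(f p, f q) = c' s(p, q)) :
    G.IsRainbowCenter c (f i) (f j) (f k) :=
  ⟨f.map_adj h.1, f.map_adj h.2.1, by rw [hc, hc]; exact h.2.2⟩

lemma induce_connected (h : G.IsRainbowCenter c x y z) : (G.induce {x, y, z}).Connected := by
  refine Connected.of_isUniversal (v := ⟨x, by simp⟩) ?_
  rintro ⟨w, rfl | rfl | rfl⟩ hne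
  · exact absurd rfl hne
  · exact h.1
  · exact h.2.1

end IsRainbowCenter

lemma HasRainbowCenters.exists_of_hom {H : SimpleGraph W} {c : Sym2 W → α}
    (hc : H.HasRainbowCenters c) (f : H →g G) (hf : Function.Bijective f) :
    ∃ c' : Sym2 V → α, G.HasRainbowCenters c' := by
  let e := Equiv.ofBijective f hf
  let c' : Sym2 V → α := fun E => c (E.map e.symm)
  have hcol : ∀ p q, c' s(f p, f q) = c s(p, q) := fun p q => by
    simp [c', e, Equiv.ofBijective_symm_apply_apply]
  have key := fun {i j k : W} (h : H.IsRainbowCenter c i j k) => h.map f hcol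
  refine ⟨c', fun a b d hab had hbd => ?_⟩
  have hfe : ∀ v, f (e.symm v) = v := e.apply_symm_apply
  simpa only [hfe] using (hc (e.symm.injective.ne hab) (e.symm.injective.ne had)
    (e.symm.injective.ne hbd)).imp key (Or.imp key key)

lemma Subgraph.natCard_edgeSet_coe (T : G.Subgraph) :
    Nat.card T.coe.edgeSet = Nat.card T.edgeSet := by
  rw [← T.image_coe_edgeSet_coe,
    Nat.card_image_of_injective (Sym2.map.injective Subtype.val_injective)]

lemma Subgraph.coe_isTree_iff [Finite V] (T : G.Subgraph) :
    T.coe.IsTree ↔ T.Connected ∧ Nat.card T.edgeSet + 1 = Nat.card T.verts := by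
  rw [isTree_iff_connected_and_card, natCard_edgeSet_coe, Subgraph.connected_iff']

lemma Connected.exists_adj_adj_of_natCard_eq_three {H : SimpleGraph W} (hH : H.Connected)
    (h3 : Nat.card W = 3) : ∃ x y z, y ≠ z ∧ H.Adj x y ∧ H.Adj x z := by
  classical
  have : Finite W := Nat.finite_of_card_ne_zero (by omega)
  have : Nontrivial W := Finite.one_lt_card_iff_nontrivial.mp (by omega)
  have := Fintype.ofFinite W
  rw [Nat.card_eq_fintype_card] at h3
  obtain ⟨a⟩ := hH.nonempty
  obtain ⟨t, hat⟩ := hH.preconnected.exists_adj_of_nontrivial a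
  obtain ⟨s, -, hs⟩ := Finset.exists_mem_notMem_of_card_lt_card (s := {a, t})
    (t := Finset.univ) (by rw [Finset.card_univ, h3]; exact Finset.card_le_two.trans_lt (by omega))
  rw [Finset.mem_insert, Finset.mem_singleton, not_or] at hs
  obtain ⟨r, hsr⟩ := hH.preconnected.exists_adj_of_nontrivial s
  have hr : r ∈ ({a, t, s} : Finset W) := Finset.eq_univ_iff_forall.mp (Finset.eq_univ_of_card _
    (by rw [Finset.card_eq_three.mpr ⟨a, t, s, hat.ne, Ne.symm hs.1, Ne.symm hs.2, rfl⟩, h3])) r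
  simp only [Finset.mem_insert, Finset.mem_singleton] at hr
  rcases hr with rfl | rfl | rfl
  · exact ⟨r, t, s, Ne.symm hs.2, hat, hsr.symm⟩
  · exact ⟨r, a, s, Ne.symm hs.1, hat.symm, hsr.symm⟩
  · exact absurd hsr H.irrefl

lemma IsRainbowCenter.exists_isRainbowSTree [Finite V] (h : G.IsRainbowCenter c x y z)
    {S : Set V} (hS : S ⊆ {x, y, z}) : ∃ T : G.Subgraph, G.IsRainbowSTree c S T := by
  let T := G.subgraphOfAdj h.1 ⊔ G.subgraphOfAdj h.2.1
  have hverts : T.verts = {x, y, z} := by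
    simp only [T, Subgraph.verts_sup, subgraphOfAdj_verts, Set.insert_union, Set.singleton_union,
      Set.insert_comm y x, Set.insert_idem]
  have hedges : T.edgeSet = {s(x, y), s(x, z)} := by
    simp only [T, Subgraph.edgeSet_sup, edgeSet_subgraphOfAdj, Set.singleton_union]
  have hconn : T.Connected :=
    Subgraph.connected_sup (Subgraph.subgraphOfAdj_connected h.1).preconnected
      (Subgraph.subgraphOfAdj_connected h.2.1).preconnected ⟨x, by simp⟩
  have hcard : Nat.card T.edgeSet + 1 = Nat.card T.verts := by
    rw [hverts, hedges, Nat.card_coe_set_eq, Nat.card_coe_set_eq,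
      Set.ncard_pair (fun e => h.ne (Sym2.congr_right.mp e)),
      Set.ncard_eq_three.mpr ⟨x, y, z, h.1.ne, h.2.1.ne, h.ne, rfl⟩]
  refine ⟨T, T.coe_isTree_iff.mpr ⟨hconn, hcard⟩, hverts ▸ hS, ?_⟩
  rw [hedges]
  rintro e (rfl | rfl) e' (rfl | rfl) hee
  exacts [rfl, absurd hee h.2.2, absurd hee.symm h.2.2, rfl]

lemma IsRainbowSTree.isRainbowCenter_or_or [Finite V] [Fintype α] (hα : Fintype.card α ≤ 2)
    {T : G.Subgraph} (hT : G.IsRainbowSTree c {a, b, d} T) (hab : a ≠ b) (had : a ≠ d)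
    (hbd : b ≠ d) :
    G.IsRainbowCenter c a b d ∨ G.IsRainbowCenter c b a d ∨ G.IsRainbowCenter c d a b := by
  obtain ⟨htree, hsub, hinj⟩ := hT
  have habd : ({a, b, d} : Set V).ncard = 3 :=
    Set.ncard_eq_three.mpr ⟨a, b, d, hab, had, hbd, rfl⟩
  have hedges : Nat.card T.edgeSet ≤ 2 := by
    rw [Nat.card_coe_set_eq]
    calc T.edgeSet.ncard ≤ (Set.univ : Set α).ncard :=
          Set.ncard_le_ncard_of_injOn c (fun _ _ => trivial) hinj Set.finite_univ
      _ ≤ 2 := by rwa [Set.ncard_univ, Nat.card_eq_fintype_card]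
  have hverts : T.verts = {a, b, d} := by
    refine (Set.eq_of_subset_of_ncard_le hsub ?_ (Set.toFinite _)).symm
    have := (T.coe_isTree_iff.mp htree).2
    rw [habd, ← Nat.card_coe_set_eq]
    omega
  obtain ⟨x, y, z, hyz, hxy, hxz⟩ := htree.connected.exists_adj_adj_of_natCard_eq_three
    (by rw [Nat.card_coe_set_eq, hverts, habd])
  have hcenter : G.IsRainbowCenter c x y z := by
    refine ⟨T.adj_sub hxy, T.adj_sub hxz, fun hc => hyz (Subtype.ext ?_)⟩
    exact Sym2.congr_right.mp (hinj (T.mem_edgeSet.mpr hxy) (T.mem_edgeSet.mpr hxz) hc)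
  exact hcenter.or_or_of_mem (hverts ▸ x.2) (hverts ▸ y.2) (hverts ▸ z.2)

theorem HasRainbowCenters.isRainbowColoring [Finite V] [DecidableEq V]
    (hc : G.HasRainbowCenters c) : G.IsRainbowColoring 3 c := by
  intro S hS
  obtain ⟨a, b, d, hab, had, hbd, rfl⟩ := Finset.card_eq_three.mp hS
  rcases hc hab had hbd with h | h | h <;> refine h.exists_isRainbowSTree ?_ <;>
    intro v <;> simp only [Finset.coe_insert, Finset.coe_singleton, Set.mem_insert_iff,
      Set.mem_singleton_iff] <;> tauto

theorem IsRainbowColoring.hasRainbowCenters [Finite V] [DecidableEq V] [Fintype α]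
    (hα : Fintype.card α ≤ 2) (hc : G.IsRainbowColoring 3 c) : G.HasRainbowCenters c := by
  intro a b d hab had hbd
  obtain ⟨T, hT⟩ := hc {a, b, d} (Finset.card_eq_three.mpr ⟨a, b, d, hab, had, hbd, rfl⟩)
  exact IsRainbowSTree.isRainbowCenter_or_or hα (by simpa using hT) hab had hbd

lemma HasRainbowCenters.nontrivial [Fintype V] (hc : G.HasRainbowCenters c)
    (hV : 3 ≤ Fintype.card V) : Nontrivial α := by
  obtain ⟨a, b, d, hab, had, hbd⟩ := Fintype.two_lt_card_iff.mp hV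
  rcases hc hab had hbd with h | h | h <;> exact nontrivial_of_ne _ _ h.2.2

theorem rxk_three_eq_two_iff [Fintype V] [DecidableEq V] :
    G.rxk 3 = 2 ↔ 3 ≤ Fintype.card V ∧ ∃ c : Sym2 V → Fin 2, G.HasRainbowCenters c := by
  have few_colors : ∀ q < 2, ∀ c : Sym2 V → Fin q, 3 ≤ Fintype.card V →
      ¬ G.IsRainbowColoring 3 c := fun q hq c hV hc => by
    have := (hc.hasRainbowCenters (by rw [Fintype.card_fin]; omega)).nontrivial hV
    rw [Fin.nontrivial_iff_two_le] at this
    omega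
  unfold rxk
  constructor
  · intro h
    obtain ⟨c, hc⟩ : 2 ∈ {q | ∃ c : Sym2 V → Fin q, G.IsRainbowColoring 3 c} :=
      h ▸ Nat.sInf_mem (Nat.nonempty_of_pos_sInf (by omega))
    refine ⟨by_contra fun hV => ?_, c, hc.hasRainbowCenters (by simp)⟩
    have : sInf {q | ∃ c : Sym2 V → Fin q, G.IsRainbowColoring 3 c} ≤ 1 :=
      Nat.sInf_le ⟨fun _ => 0, fun S hS => absurd (hS ▸ S.card_le_univ) (by omega)⟩
    omega
  · rintro ⟨hV, c, hc⟩
    refine le_antisymm (Nat.sInf_le ⟨c, hc.isRainbowColoring⟩)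
      (le_csInf ⟨2, c, hc.isRainbowColoring⟩ fun q ⟨c', hc'⟩ => ?_)
    by_contra! hq
    exact few_colors q hq c' hV hc'

lemma HasRainbowCenters.color_ne_of_color_eq (hc : G.HasRainbowCenters c) {u p q : V}
    (hup : u ≠ p) (huq : u ≠ q) (hpq : p ≠ q) (h : c s(u, p) = c s(u, q)) :
    c s(p, q) ≠ c s(u, p) := by
  rcases hc hup huq hpq with h' | h' | h'
  · exact absurd h h'.2.2
  · rw [Sym2.eq_swap (a := u)]
    exact h'.2.2.symm
  · rw [h, Sym2.eq_swap (a := p), Sym2.eq_swap (a := u)]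
    exact h'.2.2.symm

lemma HasRainbowCenters.twoConnected [Fintype V] (hc : G.HasRainbowCenters c)
    (h4 : Fintype.card V = 4) : G.TwoConnected := by
  classical
  refine ⟨by omega, fun v => ?_⟩
  obtain ⟨a, b, d, hab, had, hbd, habd⟩ := Finset.card_eq_three.mp
    (by rw [Finset.card_erase_of_mem (Finset.mem_univ v), Finset.card_univ, h4] :
      (Finset.univ.erase v).card = 3)
  have hv : ({v}ᶜ : Set V) = {a, b, d} := by
    ext w
    simpa using Finset.ext_iff.mp habd w
  rw [hv]
  rcases hc hab had hbd with h | h | h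
  · exact h.induce_connected
  · rw [Set.insert_comm]
    exact h.induce_connected
  · rw [Set.pair_comm b d, Set.insert_comm a d]
    exact h.induce_connected

lemma HasRainbowCenters.eq_top [Fintype V] {c : Sym2 V → Fin 2} (hc : G.HasRainbowCenters c)
    (h5 : 5 ≤ Fintype.card V) : G = ⊤ := by
  classical
  ext u v
  refine ⟨G.ne_of_adj, fun huv => by_contra fun hna => ?_⟩
  have center : ∀ w, w ≠ u → w ≠ v → G.IsRainbowCenter c w u v := fun w hwu hwv =>
    ((hc huv hwu.symm hwv.symm).resolve_left fun h => hna h.1).resolve_left fun h => hna h.1.symm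
  obtain ⟨p, hp, q, hq, hpq, hu⟩ := Finset.exists_ne_map_eq_of_card_lt_of_maps_to
    (s := Finset.univ \ {u, v}) (t := Finset.univ) (f := fun w => c s(u, w))
    (by rw [Finset.card_sdiff_of_subset (Finset.subset_univ _), Finset.card_univ,
      Finset.card_univ, Fintype.card_fin, Finset.card_pair huv]; omega)
    (fun _ _ => Finset.mem_univ _)
  simp only [Finset.mem_sdiff, Finset.mem_univ, Finset.mem_insert, Finset.mem_singleton,
    not_or, true_and] at hp hq
  have hpc := (center p hp.1 hp.2).2.2
  have hqc := (center q hq.1 hq.2).2.2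
  have hv : c s(v, p) = c s(v, q) := by
    simp only [Sym2.eq_swap (a := v), Sym2.eq_swap (b := u)] at hpc hqc hu ⊢
    omega
  have h1 := hc.color_ne_of_color_eq (Ne.symm hp.1) (Ne.symm hq.1) hpq hu
  have h2 := hc.color_ne_of_color_eq (Ne.symm hp.2) (Ne.symm hq.2) hpq hv
  simp only [Sym2.eq_swap (a := p)] at hpc
  omega

lemma HasRainbowCenters.card_le_five [Fintype V] {c : Sym2 V → Fin 2}
    (hc : G.HasRainbowCenters c) : Fintype.card V ≤ 5 := by
  classical
  by_contra! h6
  obtain ⟨u⟩ : Nonempty V := Fintype.card_pos_iff.mp (by omega)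
  obtain ⟨κ, -, hκ⟩ := Finset.exists_lt_card_fiber_of_mul_lt_card_of_maps_to
    (s := Finset.univ.erase u) (t := Finset.univ) (f := fun w => c s(u, w)) (n := 2)
    (fun _ _ => Finset.mem_univ _)
    (by rw [Finset.card_erase_of_mem (Finset.mem_univ u), Finset.card_univ, Finset.card_univ,
      Fintype.card_fin]; omega)
  obtain ⟨x, y, z, hx, hy, hz, hxy, hxz, hyz⟩ := Finset.two_lt_card_iff.mp hκ
  simp only [Finset.mem_filter, Finset.mem_erase, Finset.mem_univ, and_true] at hx hy hz
  have hxy' := hc.color_ne_of_color_eq hx.1.symm hy.1.symm hxy (hx.2.trans hy.2.symm)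
  have hxz' := hc.color_ne_of_color_eq hx.1.symm hz.1.symm hxz (hx.2.trans hz.2.symm)
  have hyz' := hc.color_ne_of_color_eq hy.1.symm hz.1.symm hyz (hy.2.trans hz.2.symm)
  have hux := hx.2
  have huy := hy.2
  have huz := hz.2
  rcases hc hxy hxz hyz with h | h | h
  · exact h.2.2 (by omega)
  · exact h.2.2 (by rw [Sym2.eq_swap]; omega)
  · exact h.2.2 (by rw [Sym2.eq_swap, Sym2.eq_swap (a := z)]; omega)

lemma HasRainbowCenters.of_card_eq_three [Fintype V] (h3 : Fintype.card V = 3)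
    (h : G.IsRainbowCenter c x y z) : G.HasRainbowCenters c := by
  classical
  intro a b d hab had hbd
  have huniv : ∀ w, w ∈ ({a, b, d} : Set V) := fun w => by
    simpa using Finset.eq_univ_iff_forall.mp (Finset.eq_univ_of_card ({a, b, d} : Finset V)
      (by rw [Finset.card_eq_three.mpr ⟨a, b, d, hab, had, hbd, rfl⟩, h3])) w
  exact h.or_or_of_mem (huniv x) (huniv y) (huniv z)

lemma Connected.exists_hasRainbowCenters_of_card_eq_three [Fintype V] (hG : G.Connected)
    (h3 : Fintype.card V = 3) : ∃ c : Sym2 V → Fin 2, G.HasRainbowCenters c := by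
  classical
  obtain ⟨x, y, z, hyz, hxy, hxz⟩ :=
    hG.exists_adj_adj_of_natCard_eq_three (by rwa [Nat.card_eq_fintype_card])
  refine ⟨fun e => if e = s(x, y) then 0 else 1, .of_card_eq_three h3 ⟨hxy, hxz, ?_⟩⟩
  simp [hyz.symm, hxy.ne]

lemma hasRainbowCenters_cycleGraph_four :
    (cycleGraph 4).HasRainbowCenters
      fun e => if e = s(0, 1) ∨ e = s(2, 3) then (0 : Fin 2) else 1 := by
  unfold HasRainbowCenters IsRainbowCenter
  decide

lemma hasRainbowCenters_top_fin_five :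
    (⊤ : SimpleGraph (Fin 5)).HasRainbowCenters
      fun e => if e ∈ (cycleGraph 5).edgeSet then (0 : Fin 2) else 1 := by
  unfold HasRainbowCenters IsRainbowCenter
  decide

lemma exists_hasRainbowCenters_of_cycle_four [Fintype V] (h4 : Fintype.card V = 4)
    {p q r s : V} (hpr : p ≠ r) (hqs : q ≠ s) (hpq : G.Adj p q) (hqr : G.Adj q r)
    (hrs : G.Adj r s) (hsp : G.Adj s p) : ∃ c : Sym2 V → Fin 2, G.HasRainbowCenters c := by
  let f : cycleGraph 4 →g G := ⟨![p, q, r, s], fun {i j} h => by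
    fin_cases i <;> fin_cases j <;> first
      | exact absurd h (by decide)
      | simp [hpq, hqr, hrs, hsp, hpq.symm, hqr.symm, hrs.symm, hsp.symm]⟩
  have hf : Function.Injective f := by
    intro i j hij
    fin_cases i <;> fin_cases j <;>
      simp_all [f, hpq.ne, hqr.ne, hrs.ne, hsp.ne, hpq.ne.symm, hqr.ne.symm, hrs.ne.symm,
        hsp.ne.symm, hpr.symm, hqs.symm]
  exact hasRainbowCenters_cycleGraph_four.exists_of_hom f
    ((Fintype.bijective_iff_injective_and_card f).mpr ⟨hf, by simp [h4]⟩)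

lemma TwoConnected.adj_or_adj [Fintype V] (hG : G.TwoConnected) (h4 : Fintype.card V = 4)
    {u p q : V} (hup : u ≠ p) (huq : u ≠ q) (hpq : p ≠ q) : G.Adj u p ∨ G.Adj u q := by
  classical
  obtain ⟨w, -, hw⟩ := Finset.exists_mem_notMem_of_card_lt_card (s := {u, p, q})
    (t := Finset.univ)
    (by rw [Finset.card_univ, h4]; exact Finset.card_le_three.trans_lt (by omega))
  simp only [Finset.mem_insert, Finset.mem_singleton, not_or] at hw
  have : Nontrivial ({w}ᶜ : Set V) :=
    nontrivial_of_ne (⟨u, Ne.symm hw.1⟩ : ({w}ᶜ : Set V)) ⟨p, Ne.symm hw.2.1⟩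
      fun h => hup congr($h.1)
  obtain ⟨⟨t, htw⟩, ht⟩ :=
    (hG.2 w).preconnected.exists_adj_of_nontrivial ⟨u, Ne.symm hw.1⟩
  have huniv : t ∈ ({u, p, q, w} : Finset V) :=
    Finset.eq_univ_iff_forall.mp (Finset.eq_univ_of_card _ (by
      rw [Finset.card_insert_of_notMem (by simp [hup, huq, Ne.symm hw.1]),
        Finset.card_eq_three.mpr ⟨p, q, w, hpq, Ne.symm hw.2.1, Ne.symm hw.2.2, rfl⟩, h4])) t
  simp only [Finset.mem_insert, Finset.mem_singleton] at huniv
  rcases huniv with rfl | rfl | rfl | rfl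
  · exact absurd ht (SimpleGraph.irrefl _)
  · exact Or.inl ht
  · exact Or.inr ht
  · exact absurd rfl htw

lemma TwoConnected.exists_hasRainbowCenters [Fintype V] (hG : G.TwoConnected)
    (h4 : Fintype.card V = 4) : ∃ c : Sym2 V → Fin 2, G.HasRainbowCenters c := by
  classical
  -- `u, w` is a non-edge unless `G` is complete; either way every pair meeting `{u, w}` once
  -- is an edge, so `u r w s` below is a 4-cycle.
  obtain ⟨u, w, huw, hcomplete⟩ :
      ∃ u w : V, u ≠ w ∧ (G.Adj u w → ∀ p q, p ≠ q → G.Adj p q) := by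
    by_cases h : ∃ u w : V, u ≠ w ∧ ¬G.Adj u w
    · obtain ⟨u, w, huw, hna⟩ := h
      exact ⟨u, w, huw, fun h => absurd h hna⟩
    · obtain ⟨u, w, huw⟩ := Fintype.exists_pair_of_one_lt_card (by omega : 1 < Fintype.card V)
      exact ⟨u, w, huw, fun _ p q hpq => by_contra fun hna => h ⟨p, q, hpq, hna⟩⟩
  obtain ⟨r, s, hrs, hother⟩ := Finset.card_eq_two.mp
    (by rw [Finset.card_sdiff_of_subset (Finset.subset_univ _), Finset.card_univ, h4,
      Finset.card_pair huw] : (Finset.univ \ {u, w}).card = 2)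
  have hr : r ≠ u ∧ r ≠ w := by simpa using Finset.ext_iff.mp hother r
  have hs : s ≠ u ∧ s ≠ w := by simpa using Finset.ext_iff.mp hother s
  have hur : G.Adj u r := (hG.adj_or_adj h4 huw (Ne.symm hr.1) (Ne.symm hr.2)).elim
    (fun h => hcomplete h _ _ (Ne.symm hr.1)) id
  have hwr : G.Adj w r := (hG.adj_or_adj h4 (Ne.symm huw) (Ne.symm hr.2) (Ne.symm hr.1)).elim
    (fun h => hcomplete h.symm _ _ (Ne.symm hr.2)) id
  have hus : G.Adj u s := (hG.adj_or_adj h4 huw (Ne.symm hs.1) (Ne.symm hs.2)).elim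
    (fun h => hcomplete h _ _ (Ne.symm hs.1)) id
  have hws : G.Adj w s := (hG.adj_or_adj h4 (Ne.symm huw) (Ne.symm hs.2) (Ne.symm hs.1)).elim
    (fun h => hcomplete h.symm _ _ (Ne.symm hs.2)) id
  exact exists_hasRainbowCenters_of_cycle_four h4 huw hrs hur hwr.symm hws hus.symm

end SimpleGraph

theorem stmt_7 {V : Type u} [Fintype V] [DecidableEq V] (G : SimpleGraph V) (n : ℕ)
    (hconn : G.Connected) (hn : Fintype.card V = n) :
    G.rxk 3 = 2 ↔
      Nonempty (G ≃g (⊤ : SimpleGraph (Fin 5))) ∨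
      (G.TwoConnected ∧ n = 4) ∨ n = 3 := by
  subst hn
  rw [rxk_three_eq_two_iff]
  constructor
  · rintro ⟨h3, c, hc⟩
    have h5 := hc.card_le_five
    obtain h | h | h : Fintype.card V = 3 ∨ Fintype.card V = 4 ∨ Fintype.card V = 5 := by omega
    · exact Or.inr (Or.inr h)
    · exact Or.inr (Or.inl ⟨hc.twoConnected h, h⟩)
    · obtain rfl := hc.eq_top h.ge
      exact Or.inl ⟨Iso.completeGraph (Fintype.equivFinOfCardEq h)⟩
  · rintro (he | ⟨hG, h4⟩ | h3)
    · obtain ⟨e⟩ := he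
      have h5 : Fintype.card V = 5 := by rw [Fintype.card_congr e.toEquiv, Fintype.card_fin]
      exact ⟨by omega,
        hasRainbowCenters_top_fin_five.exists_of_hom e.symm.toHom e.symm.bijective⟩
    · exact ⟨by omega, hG.exists_hasRainbowCenters h4⟩
    · exact ⟨by omega, hconn.exists_hasRainbowCenters_of_card_eq_three h3⟩
end

section
/- If G is a connected graph and {H_1, …, H_k} is a partition of V(G) into sets each inducing a connected subgraph, then rx_3(G) ≤ k − 1 + Σ_{i=1}^k rx_3(H_i). -/
open SimpleGraph

universe u

/-!
Call a colouring of `G` rainbow on `A` if every set of at most three vertices of `A` lies in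
a connected subgraph inside `A` whose edges get distinct colours; on all of `V` this is the
same as a 3-rainbow colouring, because such a subgraph contains a spanning tree. An optimal
3-rainbow colouring of `G[H i]` is rainbow on `H i`. Two parts `A`, `B` joined by an edge `ab`
merge at the cost of one colour: colour the edges inside `A` and inside `B` with disjoint
palettes and all other edges with a single new colour. A triple `S` meeting both parts splits
into `(S ∩ A) ∪ {a}` and `(S ∩ B) ∪ {b}`, still of size at most three, and their rainbow
subgraphs are joined by `ab`. As `G` is connected, the `k` parts merge one at a time in
`k - 1` steps.
-/

namespace SimpleGraph

variable {V α β : Type*} {G : SimpleGraph V}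

theorem Subgraph.Connected.exists_isTree_le {H : G.Subgraph} (hH : H.Connected) :
    ∃ T ≤ H, T.verts = H.verts ∧ T.coe.IsTree := by
  obtain ⟨F, hFH, hF⟩ := hH.coe.exists_isTree_le
  let T : G.Subgraph :=
    { verts := H.verts
      Adj u v := ∃ (hu : u ∈ H.verts) (hv : v ∈ H.verts), F.Adj ⟨u, hu⟩ ⟨v, hv⟩
      adj_sub := fun ⟨_, _, h⟩ => H.adj_sub (hFH h)
      edge_vert := fun ⟨hu, _, _⟩ => hu
      symm := ⟨fun _ _ ⟨hu, hv, h⟩ => ⟨hv, hu, h.symm⟩⟩ }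
  have hTF : T.coe = F := by
    ext u v
    simp [T]
  exact ⟨T, ⟨le_rfl, fun _ _ ⟨_, _, h⟩ => hFH h⟩, rfl, hTF ▸ hF⟩

theorem Subgraph.edgeSet_subset_sym2 {H : G.Subgraph} {A : Set V} (hH : H.verts ⊆ A) :
    H.edgeSet ⊆ A.sym2 :=
  fun _ he => Set.mem_sym2_iff_subset.2 fun _ hx => hH (Subgraph.mem_verts_of_mem_edge he hx)

def IsRainbowColoringOn (G : SimpleGraph V) (n : ℕ) (A : Set V) (c : Sym2 V → α) : Prop :=
  ∀ S : Finset V, ↑S ⊆ A → S.card ≤ n →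
    ∃ T : G.Subgraph, T.verts ⊆ A ∧ T.Connected ∧ ↑S ⊆ T.verts ∧ Set.InjOn c T.edgeSet

def IsRainbowColorableOn (G : SimpleGraph V) (n : ℕ) (A : Set V) (q : ℕ) : Prop :=
  ∃ c : Sym2 V → Fin q, G.IsRainbowColoringOn n A c

theorem IsRainbowColoringOn.comp {n : ℕ} {A : Set V} {c : Sym2 V → α}
    (hc : G.IsRainbowColoringOn n A c) {f : α → β} (hf : Function.Injective f) :
    G.IsRainbowColoringOn n A (f ∘ c) := by
  intro S hSA hS
  obtain ⟨T, hTA, hT, hST, hinj⟩ := hc S hSA hS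
  exact ⟨T, hTA, hT, hST, hf.comp_injOn hinj⟩

theorem IsRainbowColoringOn.isRainbowColoring [DecidableEq V] {n : ℕ} {c : Sym2 V → α}
    (hc : G.IsRainbowColoringOn n Set.univ c) : G.IsRainbowColoring n c := by
  intro S hS
  obtain ⟨T, -, hT, hST, hinj⟩ := hc S (Set.subset_univ _) hS.le
  obtain ⟨T', hT'T, hverts, htree⟩ := hT.exists_isTree_le
  exact ⟨T', htree, hverts ▸ hST, hinj.mono (Subgraph.edgeSet_mono hT'T)⟩

theorem Connected.isRainbowColoring_of_injective [DecidableEq V] (hG : G.Connected) (n : ℕ)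
    {c : Sym2 V → α} (hc : Function.Injective c) : G.IsRainbowColoring n c := by
  intro S _
  obtain ⟨T, -, hverts, htree⟩ :=
    (Subgraph.connected_iff'.2 (Subgraph.topIso.connected_iff.2 hG)).exists_isTree_le
  exact ⟨T, htree, by simp [hverts], hc.injOn⟩

theorem Connected.exists_isRainbowColoring_rxk [Finite V] [DecidableEq V] (hG : G.Connected)
    (n : ℕ) : ∃ c : Sym2 V → Fin (G.rxk n), G.IsRainbowColoring n c :=
  Nat.sInf_mem (s := {q | ∃ c : Sym2 V → Fin q, G.IsRainbowColoring n c})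
    ⟨_, Finite.equivFin (Sym2 V), hG.isRainbowColoring_of_injective n (Equiv.injective _)⟩

theorem Subgraph.edgeSet_subsingleton_of_ncard_verts_le_two {H : G.Subgraph}
    (hfin : H.verts.Finite) (h2 : H.verts.ncard ≤ 2) : H.edgeSet.Subsingleton := by
  intro e₁ he₁ e₂ he₂
  induction e₁ using Sym2.ind with | _ x y =>
  induction e₂ using Sym2.ind with | _ u v =>
  rw [Subgraph.mem_edgeSet] at he₁ he₂
  have hverts : H.verts = {x, y} :=
    (Set.eq_of_subset_of_ncard_le (Set.pair_subset (H.edge_vert he₁) (H.edge_vert he₁.symm))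
      (by rwa [Set.ncard_pair (H.adj_sub he₁).ne]) hfin).symm
  have hu : u ∈ H.verts := H.edge_vert he₂
  have hv : v ∈ H.verts := H.edge_vert he₂.symm
  have huv := (H.adj_sub he₂).ne
  rw [hverts] at hu hv
  simp only [Set.mem_insert_iff, Set.mem_singleton_iff] at hu hv
  rcases hu with rfl | rfl <;> rcases hv with rfl | rfl <;> simp_all [Sym2.eq_swap]

theorem isRainbowColoringOn_of_ncard_le_two {A : Set V} (hA : (G.induce A).Connected)
    (hfin : A.Finite) (h2 : A.ncard ≤ 2) (n : ℕ) (c : Sym2 V → α) :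
    G.IsRainbowColoringOn n A c := by
  intro S hSA _
  refine ⟨(⊤ : G.Subgraph).induce A, subset_rfl, connected_induce_iff.1 hA, hSA, ?_⟩
  exact (Subgraph.edgeSet_subsingleton_of_ncard_verts_le_two hfin h2).injOn c

theorem isRainbowColoringOn_of_induce [DecidableEq V] {n : ℕ} {A : Set V} (hfin : A.Finite)
    (hn : n ≤ A.ncard) {c : Sym2 V → α}
    (hc : (G.induce A).IsRainbowColoring n (c ∘ Sym2.map (↑))) :
    G.IsRainbowColoringOn n A c := by
  classical
  intro S hSA hS
  have := hfin.fintype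
  -- Viewing `G[A]` as a coerced subgraph of `G` lets `Subgraph.Connected.map` move trees into `G`.
  rw [induce_eq_coe_induce_top] at hc
  obtain ⟨S', hSS', -, hS'⟩ := Finset.exists_subsuperset_card_eq (n := n)
    (Finset.subset_univ (S.subtype (· ∈ A)))
    (by rwa [Finset.card_subtype, Finset.filter_true_of_mem hSA])
    (by rwa [Finset.card_univ, Fintype.card_eq_nat_card, Nat.card_coe_set_eq])
  obtain ⟨T, htree, hS'T, hinj⟩ := hc S' hS'
  refine ⟨T.map ((⊤ : G.Subgraph).induce A).hom, ?_, ?_, ?_, ?_⟩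
  · rintro _ ⟨x, -, rfl⟩
    exact x.2
  · exact (Subgraph.connected_iff'.2 htree.connected).map _
  · intro x hx
    exact ⟨⟨x, hSA hx⟩, hS'T (hSS' (Finset.mem_subtype.2 hx)), rfl⟩
  · exact (Subgraph.edgeSet_map _ T).symm ▸ hinj.image_of_comp

theorem isRainbowColorableOn_rxk_induce [DecidableEq V] {n : ℕ} (hn : n ≤ 3) {A : Set V}
    (hA : (G.induce A).Connected) (hfin : A.Finite) :
    G.IsRainbowColorableOn n A ((G.induce A).rxk n) := by
  have := hfin.to_subtype
  obtain ⟨c₀, hc₀⟩ := hA.exists_isRainbowColoring_rxk n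
  obtain ⟨a⟩ := hA.nonempty
  let c := Function.extend (Sym2.map ((↑) : A → V)) c₀ fun _ => c₀ (Sym2.diag a)
  have hc : c ∘ Sym2.map ((↑) : A → V) = c₀ := funext fun e =>
    (Sym2.map.injective Subtype.val_injective).extend_apply c₀ (fun _ => c₀ (Sym2.diag a)) e
  refine ⟨c, ?_⟩
  -- If `A` has fewer than `n` vertices, the rainbow condition on `G[A]` is vacuous and `c₀` is
  -- useless; but then `n ≤ 3` leaves `G[A]` with at most one edge.
  rcases le_or_gt n A.ncard with hnA | hAn
  · exact isRainbowColoringOn_of_induce hfin hnA (hc ▸ hc₀)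
  · exact isRainbowColoringOn_of_ncard_le_two hA hfin (by omega) n c

open Classical in
noncomputable def unionColoring (A B : Set V) (cA : Sym2 V → α) (cB : Sym2 V → β)
    (e : Sym2 V) : Option (α ⊕ β) :=
  if e ∈ A.sym2 then some (.inl (cA e)) else if e ∈ B.sym2 then some (.inr (cB e)) else none

section unionColoring

variable {A B : Set V} {cA : Sym2 V → α} {cB : Sym2 V → β}

theorem unionColoring_of_mem_left {e : Sym2 V} (he : e ∈ A.sym2) :
    unionColoring A B cA cB e = some (.inl (cA e)) := by
  simp [unionColoring, he]

theorem unionColoring_of_mem_right (hAB : Disjoint A B) {e : Sym2 V} (he : e ∈ B.sym2) :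
    unionColoring A B cA cB e = some (.inr (cB e)) := by
  have hsym2 : Disjoint A.sym2 B.sym2 := by
    rw [Set.disjoint_iff_inter_eq_empty, ← Set.sym2_inter, hAB.inter_eq, Set.sym2_empty]
  have : e ∉ A.sym2 := Set.disjoint_right.1 hsym2 he
  simp [unionColoring, he, this]

theorem unionColoring_of_adj (hAB : Disjoint A B) {a b : V} (ha : a ∈ A) (hb : b ∈ B) :
    unionColoring A B cA cB s(a, b) = none := by
  have hA : b ∉ A := Set.disjoint_right.1 hAB hb
  have hB : a ∉ B := Set.disjoint_left.1 hAB ha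
  simp [unionColoring, hA, hB]

theorem injOn_unionColoring_left {T : G.Subgraph} (hT : T.verts ⊆ A)
    (hinj : Set.InjOn cA T.edgeSet) : Set.InjOn (unionColoring A B cA cB) T.edgeSet := by
  intro e₁ h₁ e₂ h₂ heq
  rw [unionColoring_of_mem_left (Subgraph.edgeSet_subset_sym2 hT h₁),
    unionColoring_of_mem_left (Subgraph.edgeSet_subset_sym2 hT h₂)] at heq
  exact hinj h₁ h₂ (Sum.inl_injective (Option.some_injective _ heq))

theorem injOn_unionColoring_right (hAB : Disjoint A B) {T : G.Subgraph} (hT : T.verts ⊆ B)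
    (hinj : Set.InjOn cB T.edgeSet) : Set.InjOn (unionColoring A B cA cB) T.edgeSet := by
  intro e₁ h₁ e₂ h₂ heq
  rw [unionColoring_of_mem_right hAB (Subgraph.edgeSet_subset_sym2 hT h₁),
    unionColoring_of_mem_right hAB (Subgraph.edgeSet_subset_sym2 hT h₂)] at heq
  exact hinj h₁ h₂ (Sum.inr_injective (Option.some_injective _ heq))

theorem injOn_unionColoring_sup_subgraphOfAdj_sup (hAB : Disjoint A B) {a b : V} (ha : a ∈ A)
    (hb : b ∈ B) (hab : G.Adj a b) {TA TB : G.Subgraph} (hTA : TA.verts ⊆ A)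
    (hTB : TB.verts ⊆ B) (hinjA : Set.InjOn cA TA.edgeSet) (hinjB : Set.InjOn cB TB.edgeSet) :
    Set.InjOn (unionColoring A B cA cB) (TA ⊔ G.subgraphOfAdj hab ⊔ TB).edgeSet := by
  have hvA : ∀ e ∈ TA.edgeSet, unionColoring A B cA cB e = some (.inl (cA e)) :=
    fun e he => unionColoring_of_mem_left (Subgraph.edgeSet_subset_sym2 hTA he)
  have hvB : ∀ e ∈ TB.edgeSet, unionColoring A B cA cB e = some (.inr (cB e)) :=
    fun e he => unionColoring_of_mem_right hAB (Subgraph.edgeSet_subset_sym2 hTB he)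
  have hvab := unionColoring_of_adj (cA := cA) (cB := cB) hAB ha hb
  simp only [Subgraph.edgeSet_sup, edgeSet_subgraphOfAdj]
  rintro e₁ ((h₁ | rfl) | h₁) e₂ ((h₂ | rfl) | h₂) heq
  · exact injOn_unionColoring_left hTA hinjA h₁ h₂ heq
  · simp [hvA _ h₁, hvab] at heq
  · simp [hvA _ h₁, hvB _ h₂] at heq
  · simp [hvA _ h₂, hvab] at heq
  · rfl
  · simp [hvB _ h₂, hvab] at heq
  · simp [hvB _ h₁, hvA _ h₂] at heq
  · simp [hvB _ h₁, hvab] at heq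
  · exact injOn_unionColoring_right hAB hTB hinjB h₁ h₂ heq

end unionColoring

theorem IsRainbowColoringOn.union {n : ℕ} {A B : Set V} (hAB : Disjoint A B) {a b : V}
    (ha : a ∈ A) (hb : b ∈ B) (hab : G.Adj a b) {cA : Sym2 V → α} {cB : Sym2 V → β}
    (hA : G.IsRainbowColoringOn n A cA) (hB : G.IsRainbowColoringOn n B cB) :
    G.IsRainbowColoringOn n (A ∪ B) (unionColoring A B cA cB) := by
  classical
  intro S hS hSn
  by_cases hSA : ↑S ⊆ A
  · obtain ⟨T, hTA, hT, hST, hinj⟩ := hA S hSA hSn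
    exact ⟨T, hTA.trans Set.subset_union_left, hT, hST, injOn_unionColoring_left hTA hinj⟩
  by_cases hSB : ↑S ⊆ B
  · obtain ⟨T, hTB, hT, hST, hinj⟩ := hB S hSB hSn
    exact ⟨T, hTB.trans Set.subset_union_right, hT, hST,
      injOn_unionColoring_right hAB hTB hinj⟩
  set SA := S.filter (· ∈ A)
  set SB := S.filter (· ∉ A)
  have hSA_ne : SA.Nonempty := by
    obtain ⟨x, hxS, hxB⟩ := Set.not_subset.1 hSB
    exact ⟨x, Finset.mem_filter.2 ⟨hxS, (hS hxS).resolve_right hxB⟩⟩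
  have hSB_ne : SB.Nonempty := by
    obtain ⟨x, hxS, hxA⟩ := Set.not_subset.1 hSA
    exact ⟨x, Finset.mem_filter.2 ⟨hxS, hxA⟩⟩
  have hcard : SA.card + SB.card = S.card := Finset.card_filter_add_card_filter_not _
  have hSB_B : ↑SB ⊆ B := fun x hx =>
    (hS (Finset.mem_filter.1 hx).1).resolve_left (Finset.mem_filter.1 hx).2
  obtain ⟨TA, hTA, hTAc, hSTA, hinjA⟩ := hA (insert a SA)
    (by
      rw [Finset.coe_insert]
      exact Set.insert_subset ha fun x hx => (Finset.mem_filter.1 hx).2)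
    ((Finset.card_insert_le _ _).trans (by have := hSB_ne.card_pos; omega))
  obtain ⟨TB, hTB, hTBc, hSTB, hinjB⟩ := hB (insert b SB)
    (by rw [Finset.coe_insert]; exact Set.insert_subset hb hSB_B)
    ((Finset.card_insert_le _ _).trans (by have := hSA_ne.card_pos; omega))
  have haTA : a ∈ TA.verts := hSTA (Finset.mem_coe.2 (Finset.mem_insert_self a SA))
  have hbTB : b ∈ TB.verts := hSTB (Finset.mem_coe.2 (Finset.mem_insert_self b SB))
  refine ⟨TA ⊔ G.subgraphOfAdj hab ⊔ TB, ?_, ?_, ?_,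
    injOn_unionColoring_sup_subgraphOfAdj_sup hAB ha hb hab hTA hTB hinjA hinjB⟩
  · simp only [Subgraph.verts_sup, subgraphOfAdj_verts]
    exact Set.union_subset (Set.union_subset (hTA.trans Set.subset_union_left)
      (Set.pair_subset (Or.inl ha) (Or.inr hb))) (hTB.trans Set.subset_union_right)
  · refine Subgraph.connected_sup ?_ hTBc.preconnected ?_
    · exact (Subgraph.connected_sup hTAc.preconnected
        (Subgraph.subgraphOfAdj_connected hab).preconnected ⟨a, by simp [haTA]⟩).preconnected
    · exact ⟨b, by simp [hbTB]⟩
  · intro x hx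
    by_cases hxA : x ∈ A
    · exact Or.inl (Or.inl (hSTA (Finset.mem_coe.2
        (Finset.mem_insert_of_mem (Finset.mem_filter.2 ⟨hx, hxA⟩)))))
    · exact Or.inr (hSTB (Finset.mem_coe.2
        (Finset.mem_insert_of_mem (Finset.mem_filter.2 ⟨hx, hxA⟩))))

theorem IsRainbowColorableOn.union {n qA qB : ℕ} {A B : Set V}
    (hAB : Disjoint A B) {a b : V} (ha : a ∈ A) (hb : b ∈ B) (hab : G.Adj a b)
    (hA : G.IsRainbowColorableOn n A qA) (hB : G.IsRainbowColorableOn n B qB) :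
    G.IsRainbowColorableOn n (A ∪ B) (qA + qB + 1) := by
  obtain ⟨cA, hcA⟩ := hA
  obtain ⟨cB, hcB⟩ := hB
  let e : Option (Fin qA ⊕ Fin qB) ≃ Fin (qA + qB + 1) := Fintype.equivFinOfCardEq (by simp)
  exact ⟨e ∘ unionColoring A B cA cB, (hcA.union hAB ha hb hab hcB).comp e.injective⟩

theorem Preconnected.exists_adj_mem_notMem (hG : G.Preconnected) {U : Set V} {u v : V}
    (hu : u ∈ U) (hv : v ∉ U) : ∃ x ∈ U, ∃ y ∉ U, G.Adj x y := by
  obtain ⟨d, -, hd₁, hd₂⟩ := (hG u v).some.exists_boundary_dart U hu hv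
  exact ⟨_, hd₁, _, hd₂, d.adj⟩

section partition

open Function

variable {ι : Type*} [Fintype ι] {H : ι → Set V} {n : ℕ} {q : ι → ℕ}

theorem Preconnected.exists_isRainbowColorableOn_biUnion (hG : G.Preconnected)
    (hdisj : Pairwise (Disjoint on H)) (hcover : ⋃ i, H i = Set.univ)
    (hne : ∀ i, (H i).Nonempty) (hq : ∀ i, G.IsRainbowColorableOn n (H i) (q i)) :
    ∀ m < Fintype.card ι, ∃ s : Finset ι,
      s.card = m + 1 ∧ G.IsRainbowColorableOn n (⋃ i ∈ s, H i) (m + ∑ i ∈ s, q i) := by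
  classical
  intro m
  induction m with
  | zero =>
    intro hι
    obtain ⟨i⟩ := Fintype.card_pos_iff.1 hι
    exact ⟨{i}, rfl, by simpa using hq i⟩
  | succ m ih =>
    intro hm
    obtain ⟨s, hs, hU⟩ := ih (by omega)
    have hdisjU : ∀ j ∉ s, Disjoint (⋃ i ∈ s, H i) (H j) := fun j hj =>
      Set.disjoint_iUnion₂_left.2 fun i hi => hdisj (ne_of_mem_of_not_mem hi hj)
    obtain ⟨i, hi⟩ : s.Nonempty := Finset.card_pos.1 (by omega)
    obtain ⟨j, -, hj⟩ := Finset.exists_mem_notMem_of_card_lt_card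
      (hs.trans_lt (hm.trans_eq Finset.card_univ.symm))
    obtain ⟨u, hu⟩ := hne i
    obtain ⟨v, hv⟩ := hne j
    obtain ⟨x, hx, y, hy, hxy⟩ := hG.exists_adj_mem_notMem (Set.mem_biUnion hi hu)
      (Set.disjoint_right.1 (hdisjU j hj) hv)
    obtain ⟨j', hyj'⟩ := Set.mem_iUnion.1 (hcover ▸ Set.mem_univ y)
    have hj' : j' ∉ s := fun h => hy (Set.mem_biUnion h hyj')
    refine ⟨insert j' s, by rw [Finset.card_insert_of_notMem hj', hs], ?_⟩
    rw [Finset.set_biUnion_insert, Set.union_comm, Finset.sum_insert hj']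
    convert hU.union (hdisjU j' hj') hx hyj' hxy (hq j') using 1
    ring

theorem Connected.isRainbowColorableOn_univ (hG : G.Connected)
    (hdisj : Pairwise (Disjoint on H)) (hcover : ⋃ i, H i = Set.univ)
    (hne : ∀ i, (H i).Nonempty) (hq : ∀ i, G.IsRainbowColorableOn n (H i) (q i)) :
    G.IsRainbowColorableOn n Set.univ (Fintype.card ι - 1 + ∑ i, q i) := by
  obtain ⟨v⟩ := hG.nonempty
  obtain ⟨i, -⟩ := Set.mem_iUnion.1 (hcover ▸ Set.mem_univ v)
  have hι : 0 < Fintype.card ι := Fintype.card_pos_iff.2 ⟨i⟩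
  obtain ⟨s, hs, hU⟩ := hG.preconnected.exists_isRainbowColorableOn_biUnion hdisj hcover hne hq
    (Fintype.card ι - 1) (by omega)
  obtain rfl : s = Finset.univ := Finset.eq_univ_of_card s (by omega)
  simpa [hcover] using hU

end partition

end SimpleGraph

theorem stmt_14 {V : Type u} [Fintype V] [DecidableEq V] (G : SimpleGraph V)
    (hconn : G.Connected) (k : ℕ) (H : Fin k → Set V)
    (hdisj : ∀ i j, i ≠ j → Disjoint (H i) (H j))
    (hcover : (⋃ i, H i) = Set.univ)
    (hHconn : ∀ i, (G.induce (H i)).Connected) :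
    G.rxk 3 ≤ k - 1 + ∑ i, (G.induce (H i)).rxk 3 := by
  obtain ⟨c, hc⟩ := hconn.isRainbowColorableOn_univ hdisj hcover
    (fun i => Set.nonempty_coe_sort.1 (hHconn i).nonempty)
    (fun i => isRainbowColorableOn_rxk_induce le_rfl (hHconn i) (Set.toFinite _))
  exact (Nat.sInf_le ⟨c, hc.isRainbowColoring⟩ : G.rxk 3 ≤ _).trans_eq (by simp)
end
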